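/- arXiv:1907.13569 — 14 statements merged into one kernel-verified Lean document; each statement's English description precedes it below -/
import Mathlib

section
/- Let G be a group acting on a set X, A a subset of G, and Y a finite subset of X. If the image set A(Y) = {g·y : g ∈ A, y ∈ Y} satisfies |A(Y)| = |Y|, then every element of A⁻¹A stabilizes Y setwise, i.e., for all a, b ∈ A, (a⁻¹b)·Y = Y. -/
open scoped Classical Pointwise

theorem stmt0 {G X : Type*} [Group G] [MulAction G X]
    (A : Set G) (Y : Finset X) (hA : A.Nonempty) (hY : Y.Nonempty)
    (h : (Set.image2 (fun (g : G) (y : X) => g • y) A (↑Y : Set X)).ncard = Y.card) :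
    ∀ a ∈ A, ∀ b ∈ A, (a⁻¹ * b) • (↑Y : Set X) = (↑Y : Set X) := by
  set S := Set.image2 (fun (g : G) (y : X) => g • y) A (↑Y : Set X) with hS
  have hfin : S.Finite := by
    apply Set.finite_of_ncard_ne_zero
    rw [h]
    exact (Finset.card_pos.mpr hY).ne'
  have key : ∀ a ∈ A, a • (↑Y : Set X) = S := by
    intro a ha
    have hsub : a • (↑Y : Set X) ⊆ S := by
      rintro x ⟨y, hy, rfl⟩
      exact ⟨a, ha, y, hy, rfl⟩
    have hcard : (a • (↑Y : Set X)).ncard = S.ncard := by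
      rw [h]
      have : a • (↑Y : Set X) = (fun y => a • y) '' (↑Y : Set X) := rfl
      rw [this, Set.ncard_image_of_injective _ (MulAction.injective a),
        Set.ncard_coe_finset]
    exact Set.eq_of_subset_of_ncard_le hsub hcard.symm.le hfin
  intro a ha b hb
  have := key a ha
  have hb' := key b hb
  calc (a⁻¹ * b) • (↑Y : Set X) = a⁻¹ • b • (↑Y : Set X) := by rw [mul_smul]
    _ = a⁻¹ • a • (↑Y : Set X) := by rw [hb', this]
    _ = (↑Y : Set X) := inv_smul_smul a _
end

section
/- (Ruzsa triangle inequality for group actions) Let G act on X, let A₁, A₂ be nonempty finite subsets of G, and Y a finite subset of X. Then |A₁| · |A₂(Y)| ≤ |A₂A₁⁻¹| · |A₁(Y)|, where A(Y) = {g·y : g ∈ A, y ∈ Y} and A₂A₁⁻¹ = {a b⁻¹ : a ∈ A₂, b ∈ A₁}. -/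
open scoped Classical

/-! Choose for every `z ∈ B • Y` a representation `z = b • y`. Then `(a, z) ↦ (b / a, a • y)`
maps `A × B(Y)` into `(B / A) × A(Y)`, and it is injective: the product of the two coordinates
is `(b / a) • (a • y) = z`, and once `z` (hence `b`) is known, `a` is recovered from `b / a`. -/

open Finset Pointwise

theorem Finset.card_mul_card_smul_le_card_div_mul_card_smul {G X : Type*} [Group G]
    [MulAction G X] [DecidableEq G] [DecidableEq X] (A B : Finset G) (Y : Finset X) :
    #A * #(B • Y) ≤ #(B / A) * #(A • Y) := by
  have hrep : ∀ z : X, ∃ p : G × X, z ∈ B • Y → p.1 ∈ B ∧ p.2 ∈ Y ∧ p.1 • p.2 = z := by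
    intro z
    by_cases hz : z ∈ B • Y
    · obtain ⟨b, hb, y, hy, rfl⟩ := mem_smul.1 hz
      exact ⟨(b, y), fun _ ↦ ⟨hb, hy, rfl⟩⟩
    · exact ⟨(1, z), fun h ↦ absurd h hz⟩
  choose rep hrep using hrep
  rw [← card_product, ← card_product]
  refine card_le_card_of_injOn (fun q ↦ ((rep q.2).1 / q.1, q.1 • (rep q.2).2)) ?_ ?_
  · rintro ⟨a, z⟩ hq
    obtain ⟨ha, hz⟩ := mem_product.1 hq
    obtain ⟨hb, hy, -⟩ := hrep z hz
    exact mem_product.2 ⟨div_mem_div hb ha, smul_mem_smul ha hy⟩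
  · rintro ⟨a, z⟩ hq ⟨a', z'⟩ hq' heq
    obtain ⟨-, hz⟩ := mem_product.1 hq
    obtain ⟨-, hz'⟩ := mem_product.1 hq'
    obtain ⟨hdiv, hsmul⟩ := Prod.mk.inj heq
    dsimp only at hdiv hsmul
    have hzz : z = z' := by
      rw [← (hrep z hz).2.2, ← (hrep z' hz').2.2, ← div_mul_cancel (rep z).1 a,
        ← div_mul_cancel (rep z').1 a', mul_smul, mul_smul]
      exact congrArg₂ (· • ·) hdiv hsmul
    subst hzz
    rw [div_right_inj.1 hdiv]

theorem stmt2_general {G X : Type*} [Group G] [MulAction G X]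
    (A₁ A₂ : Finset G) (Y : Finset X) :
    A₁.card * ((A₂ ×ˢ Y).image (fun p => p.1 • p.2)).card ≤
      ((A₂ ×ˢ A₁).image (fun p => p.1 * p.2⁻¹)).card *
        ((A₁ ×ˢ Y).image (fun p => p.1 • p.2)).card := by
  have h := card_mul_card_smul_le_card_div_mul_card_smul A₁ A₂ Y
  rw [smul_def, smul_def, div_def] at h
  simpa only [div_eq_mul_inv] using h

theorem stmt2 {G X : Type*} [Group G] [MulAction G X]
    (A₁ A₂ : Finset G) (Y : Finset X) (h₁ : A₁.Nonempty) (h₂ : A₂.Nonempty) :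
    A₁.card * ((A₂ ×ˢ Y).image (fun p => p.1 • p.2)).card ≤
      ((A₂ ×ˢ A₁).image (fun p => p.1 * p.2⁻¹)).card *
        ((A₁ ×ˢ Y).image (fun p => p.1 • p.2)).card :=
  stmt2_general A₁ A₂ Y
end

section
/- (Growth in a subgroup implies growth) Let A and B be nonempty finite subsets of a group G, H a subgroup of G, and π : G → G/H the quotient map onto left cosets. If B ∩ H is nonempty, then |π(A)| · |B ∩ H| ≤ |AB|. -/
open scoped Classical Pointwise

/-- Choosing one point `a ∈ A` above each coset met by `A`, the translates `a • S` lie in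
pairwise distinct cosets, since `S ⊆ H`; so they are disjoint pieces of `A * S`. -/
theorem Finset.card_image_mk_mul_card_le_card_mul {G : Type*} [Group G] (H : Subgroup G)
    (A S : Finset G) (hS : ∀ s ∈ S, s ∈ H) :
    (A.image (QuotientGroup.mk : G → G ⧸ H)).card * S.card ≤ (A * S).card := by
  have hrep : ∀ c ∈ A.image (QuotientGroup.mk : G → G ⧸ H), ∃ a ∈ A, (a : G ⧸ H) = c := by
    simpa only [Finset.mem_image] using fun _ => id
  choose! rep hrepA hrep_mk using hrep
  rw [← Finset.card_product]
  refine Finset.card_le_card_of_injOn (fun p => rep p.1 * p.2) ?_ ?_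
  · rintro ⟨c, s⟩ hcs
    simp only [Finset.coe_product, Set.mem_prod, Finset.mem_coe] at hcs
    exact Finset.mul_mem_mul (hrepA c hcs.1) hcs.2
  · rintro ⟨c, s⟩ hcs ⟨c', s'⟩ hcs' heq
    simp only [Finset.coe_product, Set.mem_prod, Finset.mem_coe] at hcs hcs' heq
    have hc : c = c' := by
      rw [← hrep_mk c hcs.1, ← hrep_mk c' hcs'.1, ← QuotientGroup.mk_mul_of_mem _ (hS s hcs.2),
        heq, QuotientGroup.mk_mul_of_mem _ (hS s' hcs'.2)]
    subst hc
    rw [mul_left_cancel heq]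

theorem stmt3_general {G : Type*} [Group G] (H : Subgroup G) (A B : Finset G) :
    (A.image (QuotientGroup.mk (s := H) : G → G ⧸ H)).card *
        (B.filter (fun b => b ∈ H)).card ≤
      ((A ×ˢ B).image (fun p => p.1 * p.2)).card := by
  rw [Finset.image_mul_product]
  calc _ ≤ (A * B.filter (fun b => b ∈ H)).card :=
        Finset.card_image_mk_mul_card_le_card_mul H A _ fun _ hb => (Finset.mem_filter.1 hb).2
    _ ≤ (A * B).card := Finset.card_le_card (Finset.mul_subset_mul_left (Finset.filter_subset _ B))

theorem stmt3 {G : Type*} [Group G] (H : Subgroup G) (A B : Finset G)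
    (hA : A.Nonempty) (hB : ∃ b ∈ B, b ∈ H) :
    (A.image (QuotientGroup.mk (s := H) : G → G ⧸ H)).card *
        (B.filter (fun b => b ∈ H)).card ≤
      ((A ×ˢ B).image (fun p => p.1 * p.2)).card :=
  stmt3_general H A B
end

section
/- (Approximate multiplicative closure of symmetry sets) Let G act on X and Y ⊆ X finite. Suppose A is a nonempty finite subset of Sym_α(Y) := {g ∈ G : |Y ∩ gY| ≥ α|Y|}, where 0 < α ≤ 1. Then there exists a set P ⊆ A × A with |P| ≥ (α²/2)|A|² such that for every (s, s') ∈ P, both s⁻¹s' and s'⁻¹s lie in Sym_{α²/2}(Y). -/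
/-!
Put `d y = #{s ∈ A | y ∈ s • Y}`. Then `∑ y ∈ Y, d y = ∑ s ∈ A, #(Y ∩ s • Y) ≥ α #A #Y`, while
`∑ y ∈ Y, d y ^ 2` counts the triples `(s, s', y)` with `y ∈ Y ∩ s • Y ∩ s' • Y`. By
Cauchy–Schwarz the average of `#(Y ∩ s • Y ∩ s' • Y)` over the pairs is at least `α² #Y`, so at
least an `α² / 2` fraction of the pairs have `#(Y ∩ s • Y ∩ s' • Y) ≥ α² #Y / 2`. Translating by
`s⁻¹` embeds `Y ∩ s • Y ∩ s' • Y` into `Y ∩ (s⁻¹ * s') • Y`.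
-/

open scoped Classical Pointwise
open Finset

theorem Finset.sum_le_card_filter_mul_add {ι R : Type*} [Semiring R] [LinearOrder R]
    [IsOrderedRing R] (S : Finset ι) (f : ι → R) {M t : R} (ht : 0 ≤ t)
    (hf : ∀ i ∈ S, f i ≤ M) :
    ∑ i ∈ S, f i ≤ #{i ∈ S | t ≤ f i} * M + #S * t := by
  rw [← sum_filter_add_sum_filter_not S (fun i => t ≤ f i)]
  gcongr
  · exact (sum_le_card_nsmul _ _ _ fun i hi => hf i (mem_filter.1 hi).1).trans_eq
      (nsmul_eq_mul _ _)
  · calc ∑ i ∈ S with ¬t ≤ f i, f i ≤ #{i ∈ S | ¬t ≤ f i} * t :=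
          (sum_le_card_nsmul _ _ _ fun i hi => (not_le.1 (mem_filter.1 hi).2).le).trans_eq
            (nsmul_eq_mul _ _)
      _ ≤ #S * t := by gcongr; exact filter_subset _ _

section DoubleCounting

variable {ι X : Type*} [DecidableEq X] (A : Finset ι) (Y : Finset X) (B : ι → Finset X)

theorem Finset.sum_card_inter_eq_sum_card_filter_mem :
    ∑ i ∈ A, #(Y ∩ B i) = ∑ y ∈ Y, #{i ∈ A | y ∈ B i} := by
  simp_rw [← filter_mem_eq_inter, card_eq_sum_ones, sum_filter]
  exact sum_comm

theorem Finset.sum_card_inter_inter_eq_sum_sq :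
    ∑ p ∈ A ×ˢ A, #(Y ∩ B p.1 ∩ B p.2) = ∑ y ∈ Y, #{i ∈ A | y ∈ B i} ^ 2 := by
  simp only [inter_assoc]
  rw [sum_card_inter_eq_sum_card_filter_mem (A ×ˢ A) Y fun p => B p.1 ∩ B p.2]
  refine sum_congr rfl fun y _ => ?_
  simp only [mem_inter]
  rw [filter_product (fun i => y ∈ B i) (fun i => y ∈ B i), card_product, sq]

theorem Finset.sq_sum_card_inter_le :
    (∑ i ∈ A, #(Y ∩ B i)) ^ 2 ≤ #Y * ∑ p ∈ A ×ˢ A, #(Y ∩ B p.1 ∩ B p.2) := by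
  rw [sum_card_inter_inter_eq_sum_sq, sum_card_inter_eq_sum_card_filter_mem]
  exact sq_sum_le_card_mul_sum_sq

theorem Finset.mul_sq_card_le_card_filter_card_inter_inter {α : ℝ} (hα : 0 ≤ α)
    (hY : Y.Nonempty) (h : ∀ i ∈ A, α * #Y ≤ (#(Y ∩ B i) : ℝ)) :
    α ^ 2 / 2 * #A ^ 2 ≤
      (#{p ∈ A ×ˢ A | α ^ 2 / 2 * #Y ≤ (#(Y ∩ B p.1 ∩ B p.2) : ℝ)} : ℝ) := by
  set P := {p ∈ A ×ˢ A | α ^ 2 / 2 * #Y ≤ (#(Y ∩ B p.1 ∩ B p.2) : ℝ)}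
  set N := ∑ p ∈ A ×ˢ A, (#(Y ∩ B p.1 ∩ B p.2) : ℝ)
  have hlower : α * #A * #Y ≤ ∑ i ∈ A, (#(Y ∩ B i) : ℝ) := by
    simpa only [sum_const, nsmul_eq_mul, mul_assoc, mul_left_comm _ α] using sum_le_sum h
  have hCS : (∑ i ∈ A, (#(Y ∩ B i) : ℝ)) ^ 2 ≤ #Y * N := by
    simp only [N]
    exact_mod_cast sq_sum_card_inter_le A Y B
  have hupper : N ≤ #P * #Y + #A ^ 2 * (α ^ 2 / 2 * #Y) := by
    have := sum_le_card_filter_mul_add (A ×ˢ A) (fun p => (#(Y ∩ B p.1 ∩ B p.2) : ℝ))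
      (t := α ^ 2 / 2 * #Y) (by positivity)
      fun p _ => Nat.cast_le.2 (card_le_card (inter_subset_left.trans inter_subset_left))
    rwa [card_product, Nat.cast_mul, ← sq] at this
  have hsq : #Y ^ 2 * (α ^ 2 * #A ^ 2) ≤ #Y ^ 2 * (#P + #A ^ 2 * (α ^ 2 / 2)) :=
    calc #Y ^ 2 * (α ^ 2 * #A ^ 2) = (α * #A * #Y) ^ 2 := by ring
      _ ≤ (∑ i ∈ A, (#(Y ∩ B i) : ℝ)) ^ 2 := by gcongr
      _ ≤ #Y * N := hCS
      _ ≤ #Y * (#P * #Y + #A ^ 2 * (α ^ 2 / 2 * #Y)) := by gcongr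
      _ = #Y ^ 2 * (#P + #A ^ 2 * (α ^ 2 / 2)) := by ring
  linarith [le_of_mul_le_mul_left hsq (by positivity)]

end DoubleCounting

theorem Finset.card_inter_smul_inter_smul_le {G X : Type*} [Group G] [MulAction G X]
    [DecidableEq X] (Y : Finset X) (s t : G) :
    #(Y ∩ s • Y ∩ t • Y) ≤ #(Y ∩ (s⁻¹ * t) • Y) := by
  rw [← card_smul_finset s⁻¹, smul_finset_inter, smul_finset_inter, inv_smul_smul, smul_smul]
  exact card_le_card (inter_subset_inter_right inter_subset_right)

theorem stmt4_general {G X : Type*} [Group G] [MulAction G X]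
    (A : Finset G) (Y : Finset X) (hY : Y.Nonempty)
    (α : ℝ) (hα0 : 0 < α)
    (hsym : ∀ a ∈ A, α * Y.card ≤ ((Y ∩ Y.image (fun y => a • y)).card : ℝ)) :
    ∃ P ⊆ A ×ˢ A, (α ^ 2 / 2) * (A.card : ℝ) ^ 2 ≤ P.card ∧
      ∀ p ∈ P,
        (α ^ 2 / 2) * Y.card ≤ ((Y ∩ Y.image (fun y => (p.1⁻¹ * p.2) • y)).card : ℝ) ∧
        (α ^ 2 / 2) * Y.card ≤ ((Y ∩ Y.image (fun y => (p.2⁻¹ * p.1) • y)).card : ℝ) := by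
  refine ⟨{p ∈ A ×ˢ A | α ^ 2 / 2 * #Y ≤ (#(Y ∩ p.1 • Y ∩ p.2 • Y) : ℝ)},
    filter_subset _ _, mul_sq_card_le_card_filter_card_inter_inter A Y (· • Y) hα0.le hY hsym,
    fun p hp => ?_⟩
  have hp := (mem_filter.1 hp).2
  refine ⟨hp.trans ?_, hp.trans ?_⟩
  · exact_mod_cast card_inter_smul_inter_smul_le Y p.1 p.2
  · rw [inter_right_comm]
    exact_mod_cast card_inter_smul_inter_smul_le Y p.2 p.1

theorem stmt4 {G X : Type*} [Group G] [MulAction G X]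
    (A : Finset G) (Y : Finset X) (hA : A.Nonempty) (hY : Y.Nonempty)
    (α : ℝ) (hα0 : 0 < α) (hα1 : α ≤ 1)
    (hsym : ∀ a ∈ A, α * Y.card ≤ ((Y ∩ Y.image (fun y => a • y)).card : ℝ)) :
    ∃ P ⊆ A ×ˢ A, (α ^ 2 / 2) * (A.card : ℝ) ^ 2 ≤ P.card ∧
      ∀ p ∈ P,
        (α ^ 2 / 2) * Y.card ≤ ((Y ∩ Y.image (fun y => (p.1⁻¹ * p.2) • y)).card : ℝ) ∧
        (α ^ 2 / 2) * Y.card ≤ ((Y ∩ Y.image (fun y => (p.2⁻¹ * p.1) • y)).card : ℝ) :=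
  stmt4_general A Y hY α hα0 hsym
end

section
/- (Symmetry set bound via coset intersections) Let G act on X, A ⊆ G finite, Y ⊆ X finite nonempty, 0 < α ≤ 1. Then α|Y| · |A ∩ Sym_α(Y)| ≤ |Y|² · max_{g∈G, x∈Y} |A ∩ g·Stab(x)|. In particular |A ∩ Sym_α(Y)| ≤ α⁻¹|Y| · max_{g,x} |A ∩ g·Stab(x)|. -/
open scoped Classical

/-!
Double count the pairs `(g, y) ∈ A × Y` with `g • y ∈ Y`. Summing over `g` gives
`∑_{g ∈ A} |Y ∩ gY|`. For fixed `y`, the elements `g ∈ A` with `g • y = x` form `A ∩ g₀ Stab(y)`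
for any one of them `g₀`, so there are at most `M` of them for each of the `|Y|` targets `x`;
hence the sum is at most `|Y|² M`. Each `g ∈ A ∩ Sym_α(Y)` contributes at least `α|Y|`.
-/

open Finset

theorem Finset.card_filter_nsmul_le_sum {ι M : Type*} [AddCommMonoid M] [PartialOrder M]
    [IsOrderedAddMonoid M] (s : Finset ι) (f : ι → M) (hf : ∀ i ∈ s, 0 ≤ f i) (t : M) :
    #{i ∈ s | t ≤ f i} • t ≤ ∑ i ∈ s, f i :=
  (card_nsmul_le_sum _ f t fun _ hi => (mem_filter.1 hi).2).trans
    (sum_le_sum_of_subset_of_nonneg (filter_subset _ _) fun i hi _ => hf i hi)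

namespace MulAction

variable {G X : Type*} [Group G] [MulAction G X]

theorem card_inter_image_smul (Y : Finset X) (g : G) :
    #(Y ∩ Y.image (g • ·)) = #{y ∈ Y | g • y ∈ Y} := by
  rw [← card_image_of_injective {y ∈ Y | g • y ∈ Y} (MulAction.injective g)]
  congr 1
  ext x
  simp only [mem_inter, mem_image, mem_filter]
  constructor
  · rintro ⟨hx, y, hy, rfl⟩
    exact ⟨y, ⟨hy, hx⟩, rfl⟩
  · rintro ⟨y, ⟨hy, hgy⟩, rfl⟩
    exact ⟨hgy, y, hy, rfl⟩

theorem sum_card_inter_image_smul (A : Finset G) (Y : Finset X) :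
    ∑ g ∈ A, #(Y ∩ Y.image (g • ·)) = ∑ y ∈ Y, #{g ∈ A | g • y ∈ Y} := by
  simp only [card_inter_image_smul, card_filter]
  exact sum_comm

theorem card_filter_smul_eq_le {A : Finset G} {y : X} {M : ℕ}
    (hM : ∀ g : G, #{a ∈ A | a • y = g • y} ≤ M) (x : X) : #{a ∈ A | a • y = x} ≤ M := by
  rcases (A.filter (· • y = x)).eq_empty_or_nonempty with h | ⟨g, hg⟩
  · simp [h]
  · rw [← (mem_filter.1 hg).2]
    exact hM g

theorem card_filter_smul_mem_le {A : Finset G} (Y : Finset X) {y : X} {M : ℕ}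
    (hM : ∀ g : G, #{a ∈ A | a • y = g • y} ≤ M) : #{g ∈ A | g • y ∈ Y} ≤ M * #Y :=
  card_le_mul_card_image_of_maps_to (fun _ hg => (mem_filter.1 hg).2) M fun x _ =>
    (card_le_card (filter_subset_filter _ (filter_subset _ _))).trans (card_filter_smul_eq_le hM x)

theorem sum_card_inter_image_smul_le {A : Finset G} {Y : Finset X} {M : ℕ}
    (hM : ∀ g : G, ∀ x ∈ Y, #{a ∈ A | a • x = g • x} ≤ M) :
    ∑ g ∈ A, #(Y ∩ Y.image (g • ·)) ≤ #Y ^ 2 * M := by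
  rw [sum_card_inter_image_smul]
  calc ∑ y ∈ Y, #{g ∈ A | g • y ∈ Y}
      ≤ ∑ _y ∈ Y, M * #Y := sum_le_sum fun y hy => card_filter_smul_mem_le Y (hM · y hy)
    _ = #Y ^ 2 * M := by rw [sum_const, smul_eq_mul]; ring

end MulAction

theorem stmt8_general {G X : Type*} [Group G] [MulAction G X]
    (A : Finset G) (Y : Finset X) (hY : Y.Nonempty)
    (α : ℝ) (hα0 : 0 < α) (M : ℕ)
    (hM : ∀ g : G, ∀ x ∈ Y, (A.filter (fun a => a • x = g • x)).card ≤ M) :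
    α * Y.card *
        ((A.filter (fun g => α * Y.card ≤
          ((Y ∩ Y.image (fun y => g • y)).card : ℝ))).card : ℝ) ≤
      (Y.card : ℝ) ^ 2 * M ∧
    ((A.filter (fun g => α * Y.card ≤
        ((Y ∩ Y.image (fun y => g • y)).card : ℝ))).card : ℝ) ≤
      α⁻¹ * Y.card * M := by
  set S := A.filter (fun g => α * Y.card ≤ ((Y ∩ Y.image (fun y => g • y)).card : ℝ))
  have hYpos : (0 : ℝ) < #Y := by exact_mod_cast hY.card_pos
  have hsum : α * #Y * #S ≤ (#Y : ℝ) ^ 2 * M :=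
    calc α * #Y * #S = #S • (α * #Y) := by rw [nsmul_eq_mul]; ring
      _ ≤ ∑ g ∈ A, ((#(Y ∩ Y.image (g • ·)) : ℕ) : ℝ) :=
        card_filter_nsmul_le_sum A _ (fun _ _ => Nat.cast_nonneg _) _
      _ ≤ (#Y : ℝ) ^ 2 * M := by exact_mod_cast MulAction.sum_card_inter_image_smul_le hM
  refine ⟨hsum, le_of_mul_le_mul_left ?_ (by positivity : 0 < α * #Y)⟩
  calc α * #Y * #S ≤ (#Y : ℝ) ^ 2 * M := hsum
    _ = α * #Y * (α⁻¹ * #Y * M) := by field_simp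

theorem stmt8 {G X : Type*} [Group G] [MulAction G X]
    (A : Finset G) (Y : Finset X) (hY : Y.Nonempty)
    (α : ℝ) (hα0 : 0 < α) (hα1 : α ≤ 1) (M : ℕ)
    (hM : ∀ g : G, ∀ x ∈ Y, (A.filter (fun a => a • x = g • x)).card ≤ M) :
    α * Y.card *
        ((A.filter (fun g => α * Y.card ≤
          ((Y ∩ Y.image (fun y => g • y)).card : ℝ))).card : ℝ) ≤
      (Y.card : ℝ) ^ 2 * M ∧
    ((A.filter (fun g => α * Y.card ≤
        ((Y ∩ Y.image (fun y => g • y)).card : ℝ))).card : ℝ) ≤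
      α⁻¹ * Y.card * M :=
  stmt8_general A Y hY α hα0 M hM
end

section
/- If a group G acts freely on X (only the identity fixes any point), Y ⊆ X is finite nonempty, and 0 < α ≤ 1, then |Sym_α(Y)| ≤ |Y|/α, i.e., α·|Sym_α(Y)| ≤ |Y|, where Sym_α(Y) = {g ∈ G : |Y ∩ gY| ≥ α|Y|} is assumed finite (it is finite since each g ∈ Sym_α(Y) is determined by a pair (y, y') ∈ Y × Y with gy = y'). -/
/-!
Count the pairs `(g, y)` with `g ∈ Sym_α(Y)` and `y ∈ Y ∩ g • Y`. Sending such a pair to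
`(y, g⁻¹ • y) ∈ Y × Y` is injective because the action is free, so there are at most `|Y|²` of
them; on the other hand each `g ∈ Sym_α(Y)` contributes at least `α |Y|` pairs.
-/

open scoped Classical Pointwise
open Finset

section FreeAction

variable {G X : Type*} [Group G] [MulAction G X]

theorem smul_left_injective_of_free (hfree : ∀ g : G, g ≠ 1 → ∀ x : X, g • x ≠ x) (x : X) :
    Function.Injective (fun g : G => g • x) := by
  intro g h hgh
  by_contra hne
  refine hfree (h⁻¹ * g) (fun h1 => hne (inv_mul_eq_one.mp h1).symm) x ?_
  simp only [mul_smul, hgh, inv_smul_smul]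

theorem sum_card_inter_smul_finset_le (hfree : ∀ g : G, g ≠ 1 → ∀ x : X, g • x ≠ x)
    (S : Finset G) (Y : Finset X) : ∑ g ∈ S, #(Y ∩ g • Y) ≤ #Y * #Y := by
  rw [← card_sigma, ← card_product]
  refine card_le_card_of_injOn (fun p => (p.2, p.1⁻¹ • p.2)) ?_ ?_
  · rintro ⟨g, y⟩ hp
    simp only [coe_sigma, Set.mem_sigma_iff, mem_coe, mem_inter, mem_smul_finset] at hp
    obtain ⟨-, hy, z, hz, rfl⟩ := hp
    simpa [hy] using hz
  · rintro ⟨g, y⟩ - ⟨h, z⟩ - hpq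
    obtain ⟨rfl, hgh⟩ := Prod.mk.inj hpq
    obtain rfl := inv_injective (smul_left_injective_of_free hfree y hgh)
    rfl

theorem mul_card_le_card_of_le_card_inter_smul_finset
    (hfree : ∀ g : G, g ≠ 1 → ∀ x : X, g • x ≠ x) {Y : Finset X} (hY : Y.Nonempty) {α : ℝ}
    {S : Finset G} (hS : ∀ g ∈ S, α * #Y ≤ #(Y ∩ g • Y)) : α * #S ≤ #Y := by
  have hYpos : (0 : ℝ) < #Y := by exact_mod_cast hY.card_pos
  have hsum : (#S : ℝ) * (α * #Y) ≤ #Y * #Y :=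
    calc (#S : ℝ) * (α * #Y) ≤ ∑ g ∈ S, (#(Y ∩ g • Y) : ℝ) := by
          simpa using card_nsmul_le_sum S _ _ hS
      _ ≤ #Y * #Y := by exact_mod_cast sum_card_inter_smul_finset_le hfree S Y
  nlinarith

end FreeAction

theorem stmt9_general {G X : Type*} [Group G] [MulAction G X]
    (hfree : ∀ g : G, g ≠ 1 → ∀ x : X, g • x ≠ x)
    (Y : Finset X) (hY : Y.Nonempty) (α : ℝ)
    (hfin : {g : G | α * Y.card ≤ ((Y ∩ Y.image (fun y => g • y)).card : ℝ)}.Finite) :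
    α * ({g : G | α * Y.card ≤
        ((Y ∩ Y.image (fun y => g • y)).card : ℝ)}.ncard : ℝ) ≤ Y.card := by
  rw [Set.ncard_eq_toFinset_card _ hfin]
  exact mul_card_le_card_of_le_card_inter_smul_finset hfree hY fun g hg =>
    (hfin.mem_toFinset.mp hg :)

theorem stmt9 {G X : Type*} [Group G] [MulAction G X]
    (hfree : ∀ g : G, g ≠ 1 → ∀ x : X, g • x ≠ x)
    (Y : Finset X) (hY : Y.Nonempty) (α : ℝ) (hα0 : 0 < α) (hα1 : α ≤ 1)
    (hfin : {g : G | α * Y.card ≤ ((Y ∩ Y.image (fun y => g • y)).card : ℝ)}.Finite) :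
    α * ({g : G | α * Y.card ≤
        ((Y ∩ Y.image (fun y => g • y)).card : ℝ)}.ncard : ℝ) ≤ Y.card :=
  stmt9_general hfree Y hY α hfin
end

section
/- (Generic lower bound for action energy) Let G act on X, A ⊆ G finite, Y ⊆ X finite, and 0 < α ≤ 1. Define E(A,Y) = |{(a₁,a₂,y₁,y₂) ∈ A×A×Y×Y : a₁y₁ = a₂y₂}|. Then α|Y| · ∑_{g ∈ Sym_α(Y)} r_{A⁻¹A}(g) ≤ E(A,Y), where r_{A⁻¹A}(g) = |{(a₁,a₂) ∈ A×A : a₁⁻¹a₂ = g}|. -/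
open scoped Classical

lemma fiber_card_aux {G X : Type*} [Group G] [MulAction G X]
    (Y : Finset X) (a₁ a₂ : G) :
    ((Y ×ˢ Y).filter (fun y => a₁ • y.1 = a₂ • y.2)).card
      = (Y ∩ Y.image (fun y => (a₁⁻¹ * a₂) • y)).card := by
  apply Finset.card_bij (fun p _ => p.1)
  · rintro ⟨y₁, y₂⟩ hp
    simp only [Finset.mem_filter, Finset.mem_product] at hp
    obtain ⟨⟨h1, h2⟩, heq⟩ := hp
    simp only [Finset.mem_inter, Finset.mem_image]
    refine ⟨h1, y₂, h2, ?_⟩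
    rw [mul_smul, ← heq, inv_smul_smul]
  · rintro ⟨y₁, y₂⟩ hp ⟨z₁, z₂⟩ hq h
    simp only [Finset.mem_filter, Finset.mem_product] at hp hq
    dsimp at h
    subst h
    have h2 : a₂ • y₂ = a₂ • z₂ := by rw [← hp.2, hq.2]
    have := smul_left_cancel a₂ h2
    simp [this]
  · intro x hx
    simp only [Finset.mem_inter, Finset.mem_image] at hx
    obtain ⟨hx1, y, hy, rfl⟩ := hx
    refine ⟨((a₁⁻¹ * a₂) • y, y), ?_, rfl⟩
    simp only [Finset.mem_filter, Finset.mem_product]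
    exact ⟨⟨hx1, hy⟩, by rw [mul_smul, smul_inv_smul]⟩

theorem stmt10 {G X : Type*} [Group G] [MulAction G X]
    (A : Finset G) (Y : Finset X) (α : ℝ) (hα0 : 0 < α) (hα1 : α ≤ 1) :
    α * Y.card *
        (∑ g ∈ (((A ×ˢ A).image (fun p => p.1⁻¹ * p.2)).filter
            (fun g => α * Y.card ≤ ((Y ∩ Y.image (fun y => g • y)).card : ℝ))),
          (((A ×ˢ A).filter (fun p => p.1⁻¹ * p.2 = g)).card : ℝ)) ≤
      ((((A ×ˢ A) ×ˢ (Y ×ˢ Y)).filter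
          (fun q => q.1.1 • q.2.1 = q.1.2 • q.2.2)).card : ℝ) := by
  set S := (A ×ˢ A).image (fun p => p.1⁻¹ * p.2) with hS
  set T := S.filter (fun g => α * Y.card ≤ ((Y ∩ Y.image (fun y => g • y)).card : ℝ)) with hT
  have hE : ((((A ×ˢ A) ×ˢ (Y ×ˢ Y)).filter
          (fun q => q.1.1 • q.2.1 = q.1.2 • q.2.2)).card : ℝ)
      = ∑ g ∈ S, (((A ×ˢ A).filter (fun p => p.1⁻¹ * p.2 = g)).card : ℝ) *
          ((Y ∩ Y.image (fun y => g • y)).card : ℝ) := by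
    have step1 : (((A ×ˢ A) ×ˢ (Y ×ˢ Y)).filter
          (fun q => q.1.1 • q.2.1 = q.1.2 • q.2.2)).card
        = ∑ p ∈ A ×ˢ A, ((Y ∩ Y.image (fun y => (p.1⁻¹ * p.2) • y)).card) := by
      rw [Finset.card_filter, Finset.sum_product]
      refine Finset.sum_congr rfl fun p _ => ?_
      rw [← Finset.card_filter]
      exact fiber_card_aux Y p.1 p.2
    rw [step1]
    push_cast
    rw [Finset.sum_comp (fun g => ((Y ∩ Y.image (fun y => g • y)).card : ℝ))
        (fun p : G × G => p.1⁻¹ * p.2)]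
    refine Finset.sum_congr rfl fun g _ => ?_
    rw [nsmul_eq_mul]
  rw [hE]
  have hsub : T ⊆ S := Finset.filter_subset _ _
  have h2 : ∑ g ∈ T, (((A ×ˢ A).filter (fun p => p.1⁻¹ * p.2 = g)).card : ℝ) *
          ((Y ∩ Y.image (fun y => g • y)).card : ℝ)
      ≤ ∑ g ∈ S, (((A ×ˢ A).filter (fun p => p.1⁻¹ * p.2 = g)).card : ℝ) *
          ((Y ∩ Y.image (fun y => g • y)).card : ℝ) := by
    refine Finset.sum_le_sum_of_subset_of_nonneg hsub fun g _ _ => ?_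
    positivity
  refine le_trans ?_ h2
  rw [Finset.mul_sum]
  refine Finset.sum_le_sum fun g hg => ?_
  rw [Finset.mem_filter] at hg
  rw [mul_comm (α * (Y.card : ℝ))]
  exact mul_le_mul_of_nonneg_left hg.2 (by positivity)
end

section
/- (Generic upper bound for action energy) Let G act on X, A ⊆ G finite, Y ⊆ X finite nonempty, 0 < α ≤ 1. Then E(A,Y) ≤ (⌈α|Y|⌉ − 1)|A|² + |Y| · ∑_{g ∈ Sym_α(Y)} r_{A⁻¹A}(g), where E(A,Y) = |{(a₁,a₂,y₁,y₂) : a₁y₁ = a₂y₂}| and r_{A⁻¹A}(g) = |{(a₁,a₂) ∈ A×A : a₁⁻¹a₂ = g}|. -/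
open scoped Classical

theorem stmt11 {G X : Type*} [Group G] [MulAction G X]
    (A : Finset G) (Y : Finset X) (hY : Y.Nonempty)
    (α : ℝ) (hα0 : 0 < α) (hα1 : α ≤ 1) :
    ((((A ×ˢ A) ×ˢ (Y ×ˢ Y)).filter
        (fun q => q.1.1 • q.2.1 = q.1.2 • q.2.2)).card : ℝ) ≤
      ((⌈α * (Y.card : ℝ)⌉ : ℝ) - 1) * (A.card : ℝ) ^ 2 +
        (Y.card : ℝ) *
          (∑ g ∈ (((A ×ˢ A).image (fun p => p.1⁻¹ * p.2)).filter
              (fun g => α * Y.card ≤ ((Y ∩ Y.image (fun y => g • y)).card : ℝ))),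
            (((A ×ˢ A).filter (fun p => p.1⁻¹ * p.2 = g)).card : ℝ)) := by
  classical
  set S : Finset G := (((A ×ˢ A).image (fun p => p.1⁻¹ * p.2)).filter
      (fun g => α * Y.card ≤ ((Y ∩ Y.image (fun y => g • y)).card : ℝ))) with hS
  set f : G → ℕ := fun g => (Y ∩ Y.image (fun y => g • y)).card with hf
  -- Step 1: rewrite energy as a sum over A × A
  have hstep1 : (((A ×ˢ A) ×ˢ (Y ×ˢ Y)).filter
        (fun q => q.1.1 • q.2.1 = q.1.2 • q.2.2)).card
      = ∑ p ∈ A ×ˢ A, f (p.1⁻¹ * p.2) := by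
    rw [Finset.card_filter, Finset.sum_product]
    refine Finset.sum_congr rfl fun p _ => ?_
    rw [← Finset.card_filter]
    refine Finset.card_bij' (fun q _ => q.1)
      (fun x _ => (x, (p.1⁻¹ * p.2)⁻¹ • x)) ?_ ?_ ?_ ?_
    · intro q hq
      simp only [Finset.mem_filter, Finset.mem_product] at hq
      obtain ⟨⟨h1, h2⟩, heq⟩ := hq
      simp only [hf, Finset.mem_inter, Finset.mem_image]
      exact ⟨h1, q.2, h2, by rw [mul_smul, ← heq, inv_smul_smul]⟩
    · intro x hx
      simp only [hf, Finset.mem_inter, Finset.mem_image] at hx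
      obtain ⟨hxY, y, hyY, hyx⟩ := hx
      simp only [Finset.mem_filter, Finset.mem_product]
      have hyx' : (p.1⁻¹ * p.2)⁻¹ • x = y := by rw [← hyx, inv_smul_smul]
      refine ⟨⟨hxY, by rw [hyx']; exact hyY⟩, ?_⟩
      show p.1 • x = p.2 • ((p.1⁻¹ * p.2)⁻¹ • x)
      rw [mul_inv_rev, inv_inv, mul_smul, ← mul_smul, mul_inv_cancel, one_smul]
    · intro q hq
      simp only [Finset.mem_filter, Finset.mem_product] at hq
      obtain ⟨⟨h1, h2⟩, heq⟩ := hq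
      have hq2 : (p.1⁻¹ * p.2)⁻¹ • q.1 = q.2 := by
        rw [mul_inv_rev, inv_inv, mul_smul, heq, inv_smul_smul]
      rw [hq2]
    · intro x _
      rfl
  rw [hstep1]
  push_cast
  -- split the sum
  rw [← Finset.sum_filter_add_sum_filter_not (A ×ˢ A) (fun p => p.1⁻¹ * p.2 ∈ S)
      (fun p => (f (p.1⁻¹ * p.2) : ℝ))]
  rw [add_comm]
  have hAA : (A ×ˢ A).card = A.card ^ 2 := by
    rw [Finset.card_product]; ring
  -- bound the non-symmetric part
  have hbound1 : ∑ p ∈ (A ×ˢ A).filter (fun p => ¬ p.1⁻¹ * p.2 ∈ S),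
      (f (p.1⁻¹ * p.2) : ℝ) ≤ ((⌈α * (Y.card : ℝ)⌉ : ℝ) - 1) * (A.card : ℝ) ^ 2 := by
    have hterm : ∀ p ∈ (A ×ˢ A).filter (fun p => ¬ p.1⁻¹ * p.2 ∈ S),
        (f (p.1⁻¹ * p.2) : ℝ) ≤ (⌈α * (Y.card : ℝ)⌉ : ℝ) - 1 := by
      intro p hp
      simp only [Finset.mem_filter, hS, Finset.mem_image] at hp
      obtain ⟨hpAA, hns⟩ := hp
      have hmem : p.1⁻¹ * p.2 ∈ (A ×ˢ A).image (fun p => p.1⁻¹ * p.2) :=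
        Finset.mem_image_of_mem _ hpAA
      have hlt : (f (p.1⁻¹ * p.2) : ℝ) < α * Y.card := by
        by_contra hge
        exact hns ⟨by simpa [Finset.mem_image] using hmem, le_of_not_gt hge⟩
      have hzlt : (f (p.1⁻¹ * p.2) : ℤ) < ⌈α * (Y.card : ℝ)⌉ := by
        rw [Int.lt_ceil]; push_cast; exact hlt
      have : (f (p.1⁻¹ * p.2) : ℤ) ≤ ⌈α * (Y.card : ℝ)⌉ - 1 := by omega
      calc (f (p.1⁻¹ * p.2) : ℝ) = ((f (p.1⁻¹ * p.2) : ℤ) : ℝ) := by push_cast; ring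
        _ ≤ ((⌈α * (Y.card : ℝ)⌉ - 1 : ℤ) : ℝ) := by exact_mod_cast this
        _ = (⌈α * (Y.card : ℝ)⌉ : ℝ) - 1 := by push_cast; ring
    calc ∑ p ∈ (A ×ˢ A).filter (fun p => ¬ p.1⁻¹ * p.2 ∈ S), (f (p.1⁻¹ * p.2) : ℝ)
        ≤ ∑ _p ∈ (A ×ˢ A).filter (fun p => ¬ p.1⁻¹ * p.2 ∈ S),
            ((⌈α * (Y.card : ℝ)⌉ : ℝ) - 1) := Finset.sum_le_sum hterm
      _ = (((A ×ˢ A).filter (fun p => ¬ p.1⁻¹ * p.2 ∈ S)).card : ℝ) *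
            ((⌈α * (Y.card : ℝ)⌉ : ℝ) - 1) := by rw [Finset.sum_const, nsmul_eq_mul]
      _ ≤ ((A ×ˢ A).card : ℝ) * ((⌈α * (Y.card : ℝ)⌉ : ℝ) - 1) := by
          apply mul_le_mul_of_nonneg_right
          · exact_mod_cast Finset.card_le_card (Finset.filter_subset _ _)
          · have h1 : (1 : ℤ) ≤ ⌈α * (Y.card : ℝ)⌉ := by
              apply Int.ceil_pos.mpr
              have : (0 : ℝ) < (Y.card : ℝ) := by
                exact_mod_cast Finset.card_pos.mpr hY
              positivity
            have : (1 : ℝ) ≤ (⌈α * (Y.card : ℝ)⌉ : ℝ) := by exact_mod_cast h1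
            linarith
      _ = ((⌈α * (Y.card : ℝ)⌉ : ℝ) - 1) * (A.card : ℝ) ^ 2 := by
          rw [hAA]; push_cast; ring
  -- bound the symmetric part
  have hbound2 : ∑ p ∈ (A ×ˢ A).filter (fun p => p.1⁻¹ * p.2 ∈ S),
      (f (p.1⁻¹ * p.2) : ℝ) ≤ (Y.card : ℝ) *
        (∑ g ∈ S, (((A ×ˢ A).filter (fun p => p.1⁻¹ * p.2 = g)).card : ℝ)) := by
    have hmaps : ∀ p ∈ (A ×ˢ A).filter (fun p => p.1⁻¹ * p.2 ∈ S),
        p.1⁻¹ * p.2 ∈ S := fun p hp => (Finset.mem_filter.mp hp).2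
    rw [← Finset.sum_fiberwise_of_maps_to hmaps (fun p => (f (p.1⁻¹ * p.2) : ℝ))]
    have hfib : ∀ g ∈ S,
        ∑ p ∈ ((A ×ˢ A).filter (fun p => p.1⁻¹ * p.2 ∈ S)).filter
            (fun p => p.1⁻¹ * p.2 = g), (f (p.1⁻¹ * p.2) : ℝ)
        = (((A ×ˢ A).filter (fun p => p.1⁻¹ * p.2 = g)).card : ℝ) * (f g : ℝ) := by
      intro g hg
      have hset : ((A ×ˢ A).filter (fun p => p.1⁻¹ * p.2 ∈ S)).filter
          (fun p => p.1⁻¹ * p.2 = g) = (A ×ˢ A).filter (fun p => p.1⁻¹ * p.2 = g) := by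
        rw [Finset.filter_filter]
        apply Finset.filter_congr
        intro p _
        constructor
        · exact fun h => h.2
        · exact fun h => ⟨h ▸ hg, h⟩
      rw [hset]
      rw [Finset.sum_congr rfl (fun p hp => by
        rw [(Finset.mem_filter.mp hp).2])]
      rw [Finset.sum_const, nsmul_eq_mul]
    rw [Finset.sum_congr rfl hfib]
    rw [Finset.mul_sum]
    apply Finset.sum_le_sum
    intro g _
    rw [mul_comm ((Y.card : ℝ))]
    apply mul_le_mul_of_nonneg_left _ (by positivity)
    exact_mod_cast Finset.card_le_card (Finset.inter_subset_left)
  exact add_le_add hbound1 hbound2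
end

section
/- (Orbit-stabilizer theorem for sets) Let G act on X, x ∈ X, and A ⊆ G finite nonempty. Then |A|² ≤ |A(x)| · ∑_{a∈A} |a⁻¹A ∩ Stab(x)|, where A(x) = {a·x : a ∈ A}. In particular, there exists a₀ ∈ A such that |a₀⁻¹A ∩ Stab(x)| · |A(x)| ≥ |A|. -/
open scoped Classical

theorem stmt12 {G X : Type*} [Group G] [MulAction G X]
    (A : Finset G) (hA : A.Nonempty) (x : X) :
    A.card ^ 2 ≤ (A.image (fun a => a • x)).card *
        ∑ a ∈ A, (A.filter (fun b => (a⁻¹ * b) • x = x)).card ∧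
      ∃ a₀ ∈ A, A.card ≤
        (A.filter (fun b => (a₀⁻¹ * b) • x = x)).card * (A.image (fun a => a • x)).card := by
  classical
  set T := A.image (fun a => a • x) with hT
  set f : X → ℕ := fun y => (A.filter (fun b => b • x = y)).card with hf
  have hfilter : ∀ a : G, (A.filter (fun b => (a⁻¹ * b) • x = x)).card = f (a • x) := by
    intro a
    congr 1
    apply Finset.filter_congr
    intro b _
    simp only [mul_smul]
    constructor
    · intro h; have := congrArg (fun z => a • z) h; simpa [smul_smul] using this
    · intro h; rw [h]; simp
  have hcard : A.card = ∑ y ∈ T, f y := Finset.card_eq_sum_card_image _ _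
  have hsum : ∑ a ∈ A, f (a • x) = ∑ y ∈ T, f y ^ 2 := by
    rw [Finset.sum_comp f (fun a => a • x)]
    apply Finset.sum_congr rfl
    intro y _
    rw [smul_eq_mul, sq]
  constructor
  · calc A.card ^ 2 = (∑ y ∈ T, f y) ^ 2 := by rw [hcard]
      _ ≤ T.card * ∑ y ∈ T, f y ^ 2 := sq_sum_le_card_mul_sum_sq
      _ = T.card * ∑ a ∈ A, (A.filter (fun b => (a⁻¹ * b) • x = x)).card := by
          rw [← hsum]; congr 1; exact (Finset.sum_congr rfl fun a _ => (hfilter a)).symm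
  · have hTne : T.Nonempty := hA.image _
    have : ∃ y ∈ T, A.card ≤ T.card * f y := by
      apply Finset.exists_le_of_sum_le hTne
      rw [Finset.sum_const, ← Finset.mul_sum, ← hcard, smul_eq_mul, mul_comm]
    obtain ⟨y, hyT, hy⟩ := this
    obtain ⟨a₀, ha₀A, ha₀⟩ := Finset.mem_image.mp hyT
    refine ⟨a₀, ha₀A, ?_⟩
    rw [hfilter a₀, ha₀, mul_comm]
    exact hy
end

section
/- (Large energy gives a large overlap with a symmetry set) Let G act on X, A ⊆ G and Y ⊆ X finite nonempty, and 0 < α ≤ 1. If E(A,Y) ≥ 2α|A|²|Y|, then there exists a₀ ∈ A such that |a₀⁻¹A ∩ Sym_α(Y)| ≥ α|A|. -/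
open scoped Classical

private lemma card_pairs_aux {G X : Type*} [Group G] [MulAction G X]
    (a b : G) (Y : Finset X) :
    ((Y ×ˢ Y).filter (fun p : X × X => a • p.1 = b • p.2)).card
      = (Y ∩ Y.image (fun y => (a⁻¹ * b) • y)).card := by
  apply Finset.card_bij (fun p _ => p.1)
  · intro p hp
    simp only [Finset.mem_filter, Finset.mem_product] at hp
    simp only [Finset.mem_inter, Finset.mem_image]
    exact ⟨hp.1.1, p.2, hp.1.2, by rw [mul_smul, ← hp.2, inv_smul_smul]⟩
  · intro p hp q hq h
    simp only [Finset.mem_filter] at hp hq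
    have h2 : p.2 = q.2 := by
      have : b • p.2 = b • q.2 := by rw [← hp.2, ← hq.2, h]
      exact smul_left_cancel b this
    exact Prod.ext h h2
  · intro y hy
    simp only [Finset.mem_inter, Finset.mem_image] at hy
    obtain ⟨hy1, z, hz, hzy⟩ := hy
    refine ⟨(y, z), ?_, rfl⟩
    simp only [Finset.mem_filter, Finset.mem_product]
    exact ⟨⟨hy1, hz⟩, by rw [← hzy, mul_smul, smul_inv_smul]⟩

theorem stmt15 {G X : Type*} [Group G] [MulAction G X]
    (A : Finset G) (Y : Finset X) (hA : A.Nonempty) (hY : Y.Nonempty)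
    (α : ℝ) (hα0 : 0 < α) (hα1 : α ≤ 1)
    (hE : 2 * α * (A.card : ℝ) ^ 2 * Y.card ≤
      ((((A ×ˢ A) ×ˢ (Y ×ˢ Y)).filter
          (fun q => q.1.1 • q.2.1 = q.1.2 • q.2.2)).card : ℝ)) :
    ∃ a₀ ∈ A, α * A.card ≤
      ((A.filter (fun b => α * Y.card ≤
        ((Y ∩ Y.image (fun y => (a₀⁻¹ * b) • y)).card : ℝ))).card : ℝ) := by
  classical
  set f : G → G → ℕ := fun a b => (Y ∩ Y.image (fun y => (a⁻¹ * b) • y)).card with hf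
  set S : G → Finset G := fun a => A.filter (fun b => α * Y.card ≤ (f a b : ℝ)) with hS
  -- decompose the energy
  have hEdecomp : (((A ×ˢ A) ×ˢ (Y ×ˢ Y)).filter
      (fun q => q.1.1 • q.2.1 = q.1.2 • q.2.2)).card
      = ∑ a ∈ A, ∑ b ∈ A, f a b := by
    rw [Finset.card_filter, Finset.sum_product, Finset.sum_product]
    refine Finset.sum_congr rfl fun a _ => Finset.sum_congr rfl fun b _ => ?_
    show (∑ r ∈ Y ×ˢ Y, if a • r.1 = b • r.2 then 1 else 0) = f a b
    rw [← Finset.card_filter]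
    exact card_pairs_aux a b Y
  -- bound each inner sum
  have hinner : ∀ a ∈ A, (∑ b ∈ A, (f a b : ℝ)) ≤
      ((S a).card : ℝ) * Y.card + (A.card : ℝ) * (α * Y.card) := by
    intro a _
    rw [← Finset.sum_filter_add_sum_filter_not A (fun b => α * Y.card ≤ (f a b : ℝ))]
    gcongr
    · calc (∑ b ∈ S a, (f a b : ℝ)) ≤ ∑ b ∈ S a, (Y.card : ℝ) := by
            refine Finset.sum_le_sum fun b _ => ?_
            exact_mod_cast Finset.card_le_card (Finset.inter_subset_left)
        _ = ((S a).card : ℝ) * Y.card := by rw [Finset.sum_const, nsmul_eq_mul]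
    · calc (∑ b ∈ A.filter (fun b => ¬ α * Y.card ≤ (f a b : ℝ)), (f a b : ℝ))
          ≤ ∑ b ∈ A.filter (fun b => ¬ α * Y.card ≤ (f a b : ℝ)), (α * Y.card) := by
            refine Finset.sum_le_sum fun b hb => ?_
            exact le_of_lt (not_le.mp (Finset.mem_filter.mp hb).2)
        _ ≤ (A.card : ℝ) * (α * Y.card) := by
            rw [Finset.sum_const, nsmul_eq_mul]
            have := Finset.card_filter_le A (fun b => ¬ α * Y.card ≤ (f a b : ℝ))
            have hpos : (0:ℝ) ≤ α * Y.card := by positivity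
            exact mul_le_mul_of_nonneg_right (by exact_mod_cast this) hpos
  -- combine
  have hYpos : (0:ℝ) < Y.card := by exact_mod_cast Finset.card_pos.mpr hY
  have hsum : α * (A.card : ℝ) ^ 2 ≤ ∑ a ∈ A, ((S a).card : ℝ) := by
    have hE' : 2 * α * (A.card : ℝ) ^ 2 * Y.card ≤
        ∑ a ∈ A, ∑ b ∈ A, (f a b : ℝ) := by
      rw [hEdecomp] at hE
      push_cast at hE ⊢
      exact hE
    have hle : (∑ a ∈ A, ∑ b ∈ A, (f a b : ℝ)) ≤
        (∑ a ∈ A, ((S a).card : ℝ)) * Y.card + (A.card : ℝ) * ((A.card : ℝ) * (α * Y.card)) := by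
      calc (∑ a ∈ A, ∑ b ∈ A, (f a b : ℝ))
          ≤ ∑ a ∈ A, (((S a).card : ℝ) * Y.card + (A.card : ℝ) * (α * Y.card)) :=
            Finset.sum_le_sum hinner
        _ = (∑ a ∈ A, ((S a).card : ℝ)) * Y.card + (A.card : ℝ) * ((A.card : ℝ) * (α * Y.card)) := by
            rw [Finset.sum_add_distrib, Finset.sum_const, nsmul_eq_mul, ← Finset.sum_mul]
    have : 2 * α * (A.card : ℝ) ^ 2 * Y.card ≤
        (∑ a ∈ A, ((S a).card : ℝ)) * Y.card + α * (A.card : ℝ) ^ 2 * Y.card := by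
      calc 2 * α * (A.card : ℝ) ^ 2 * Y.card ≤ _ := hE'
        _ ≤ _ := hle
        _ = (∑ a ∈ A, ((S a).card : ℝ)) * Y.card + α * (A.card : ℝ) ^ 2 * Y.card := by ring
    have h2 : α * (A.card : ℝ) ^ 2 * Y.card ≤ (∑ a ∈ A, ((S a).card : ℝ)) * Y.card := by
      nlinarith
    exact le_of_mul_le_mul_right (by linarith) hYpos
  -- pigeonhole
  by_contra hcon
  push_neg at hcon
  have hA23 : (∑ a ∈ A, ((S a).card : ℝ)) < ∑ a ∈ A, α * (A.card : ℝ) :=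
    Finset.sum_lt_sum_of_nonempty hA (fun a ha => hcon a ha)
  rw [Finset.sum_const, nsmul_eq_mul] at hA23
  nlinarith [hsum]
end

section
/- (Large energy gives small partial image set) Let G act on X, A ⊆ G and Y ⊆ X finite nonempty, 0 < α ≤ 1. If E(A,Y) ≥ 2α|A|²|Y|, then there exists E ⊆ A × Y with |E| ≥ α|A||Y| and |A_E(Y)| ≤ α⁻²|Y|, where A_E(Y) = {a·y : (a,y) ∈ E}. -/
open scoped Classical

/-!
Write `r x` for the number of pairs `(a, y) ∈ A × Y` with `a • y = x`. Then `E(A, Y) = ∑ₓ r x ²`,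
`∑ₓ r x = |A| |Y|` and `r x ≤ |A|`, since `a` determines `y`. Take `E` to be the pairs landing on
popular points, those with `r x ≥ α |A|`. The unpopular points contribute at most `α |A|² |Y|` to the
energy, so the popular ones carry at least `α |A|² |Y| ≤ |A| |E|`. Each popular point has at least
`α |A|` preimages, so there are at most `α⁻¹ |Y| ≤ α⁻² |Y|` of them.
-/

open Finset

namespace Finset

variable {ι κ : Type*} [DecidableEq κ]

theorem card_filter_apply_eq_apply_eq (f : ι → κ) (s : Finset ι) :
    #{pq ∈ s ×ˢ s | f pq.1 = f pq.2} = ∑ p ∈ s, #{q ∈ s | f q = f p} := by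
  simp_rw [card_filter, sum_product, eq_comm]

theorem sum_le_mul_card_add_mul_card_filter_le {s : Finset ι} {w : ι → ℝ} {M c : ℝ}
    (hw : ∀ p ∈ s, w p ≤ M) (hc : 0 ≤ c) :
    ∑ p ∈ s, w p ≤ c * #s + M * #{p ∈ s | c ≤ w p} := by
  rw [← sum_filter_not_add_sum_filter s (fun p => c ≤ w p)]
  gcongr
  · calc ∑ p ∈ s with ¬c ≤ w p, w p ≤ #{p ∈ s | ¬c ≤ w p} • c :=
          sum_le_card_nsmul _ _ _ fun p hp => (not_le.1 (mem_filter.1 hp).2).le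
      _ ≤ c * #s := by
          rw [nsmul_eq_mul, mul_comm]; gcongr; exact filter_subset _ _
  · rw [mul_comm, ← nsmul_eq_mul]
    exact sum_le_card_nsmul _ _ _ fun p hp => hw p (mem_filter.1 hp).1

theorem mul_card_image_le_card_of_le_card_fiber {f : ι → κ} {s t : Finset ι} {c : ℝ}
    (ht : ∀ p ∈ t, c ≤ #{q ∈ s | f q = f p}) : c * #(t.image f) ≤ #s := by
  calc c * #(t.image f) ≤ ∑ x ∈ t.image f, (#{q ∈ s | f q = x} : ℝ) := by
        rw [mul_comm, ← nsmul_eq_mul]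
        exact card_nsmul_le_sum _ _ _ (forall_mem_image.2 ht)
    _ = #{q ∈ s | f q ∈ t.image f} := by
        rw [← sum_card_fiberwise_eq_card_filter]; push_cast; rfl
    _ ≤ #s := by exact_mod_cast card_filter_le _ _

theorem exists_large_subset_small_image_of_energy (f : ι → κ) (s : Finset ι) {α M : ℝ}
    (hα : 0 < α) (hM : 0 < M) (hfiber : ∀ x, #{q ∈ s | f q = x} ≤ M)
    (henergy : 2 * α * M * #s ≤ #{pq ∈ s ×ˢ s | f pq.1 = f pq.2}) :
    ∃ t ⊆ s, α * #s ≤ #t ∧ α * M * #(t.image f) ≤ #s := by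
  set t := {p ∈ s | α * M ≤ #{q ∈ s | f q = f p}}
  refine ⟨t, filter_subset _ _, ?_,
    mul_card_image_le_card_of_le_card_fiber fun p hp => (mem_filter.1 hp).2⟩
  have hsplit := sum_le_mul_card_add_mul_card_filter_le (s := s)
    (w := fun p => (#{q ∈ s | f q = f p} : ℝ)) (fun p _ => hfiber (f p)) (by positivity : 0 ≤ α * M)
  rw [card_filter_apply_eq_apply_eq] at henergy
  push_cast at henergy
  exact le_of_mul_le_mul_left (by linarith) hM

end Finset

section MulAction

variable {G X : Type*}

theorem card_filter_smul_eq_le [Group G] [MulAction G X] (A : Finset G) (Y : Finset X) (x : X) :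
    #{p ∈ A ×ˢ Y | p.1 • p.2 = x} ≤ #A := by
  refine card_le_card_of_injOn Prod.fst (fun p hp => (mem_product.1 (mem_filter.1 hp).1).1) ?_
  intro p hp q hq hpq
  have hpx : p.1 • p.2 = x := (mem_filter.1 hp).2
  have hqx : q.1 • q.2 = x := (mem_filter.1 hq).2
  refine Prod.ext hpq (smul_left_cancel p.1 ?_)
  rw [hpx, hpq, hqx]

theorem card_filter_smul_eq_smul_eq [SMul G X] (A : Finset G) (Y : Finset X) :
    #{q ∈ (A ×ˢ A) ×ˢ (Y ×ˢ Y) | q.1.1 • q.2.1 = q.1.2 • q.2.2} =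
      #{pq ∈ (A ×ˢ Y) ×ˢ (A ×ˢ Y) | pq.1.1 • pq.1.2 = pq.2.1 • pq.2.2} := by
  refine card_nbij' (Equiv.prodProdProdComm G G X X) (Equiv.prodProdProdComm G X G X)
    ?_ ?_ (fun _ _ => rfl) (fun _ _ => rfl) <;>
  · rintro ⟨⟨a, b⟩, c, d⟩
    simp [Equiv.prodProdProdComm, and_assoc, and_comm, and_left_comm]

end MulAction

theorem stmt16_general {G X : Type*} [Group G] [MulAction G X]
    (A : Finset G) (Y : Finset X) (hA : A.Nonempty)
    (α : ℝ) (hα0 : 0 < α) (hα1 : α ≤ 1)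
    (hE : 2 * α * (A.card : ℝ) ^ 2 * Y.card ≤
      ((((A ×ˢ A) ×ˢ (Y ×ˢ Y)).filter
          (fun q => q.1.1 • q.2.1 = q.1.2 • q.2.2)).card : ℝ)) :
    ∃ E ⊆ A ×ˢ Y, α * A.card * Y.card ≤ (E.card : ℝ) ∧
      ((E.image (fun p => p.1 • p.2)).card : ℝ) ≤ α⁻¹ ^ 2 * Y.card := by
  have hA₀ : (0 : ℝ) < #A := by exact_mod_cast hA.card_pos
  rw [card_filter_smul_eq_smul_eq] at hE
  obtain ⟨E, hEsub, hEcard, himage⟩ :=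
    exists_large_subset_small_image_of_energy (fun p : G × X => p.1 • p.2) (A ×ˢ Y) hα0 hA₀
      (fun x => by exact_mod_cast card_filter_smul_eq_le A Y x)
      (by rw [card_product]; push_cast; linarith)
  rw [card_product, Nat.cast_mul] at hEcard himage
  refine ⟨E, hEsub, by linarith, ?_⟩
  calc ((E.image fun p => p.1 • p.2).card : ℝ) ≤ α⁻¹ * #Y := by
        rw [le_inv_mul_iff₀ hα0]
        exact le_of_mul_le_mul_left (by linarith) hA₀
    _ ≤ α⁻¹ ^ 2 * #Y := by
        gcongr
        exact le_self_pow₀ ((one_le_inv₀ hα0).2 hα1) two_ne_zero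

theorem stmt16 {G X : Type*} [Group G] [MulAction G X]
    (A : Finset G) (Y : Finset X) (hA : A.Nonempty) (hY : Y.Nonempty)
    (α : ℝ) (hα0 : 0 < α) (hα1 : α ≤ 1)
    (hE : 2 * α * (A.card : ℝ) ^ 2 * Y.card ≤
      ((((A ×ˢ A) ×ˢ (Y ×ˢ Y)).filter
          (fun q => q.1.1 • q.2.1 = q.1.2 • q.2.2)).card : ℝ)) :
    ∃ E ⊆ A ×ˢ Y, α * A.card * Y.card ≤ (E.card : ℝ) ∧
      ((E.image (fun p => p.1 • p.2)).card : ℝ) ≤ α⁻¹ ^ 2 * Y.card :=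
  stmt16_general A Y hA α hα0 hα1 hE
end

section
/- (Symmetry set overlap implies large energy) Let G act on X, A ⊆ G and Y ⊆ X finite nonempty, 0 ≤ α ≤ 1. Then α² · |A ∩ Sym_α(Y)|² · |Y| ≤ E(A,Y). -/
open scoped Classical

/-!
Write `r(x)` for the number of pairs `(a, y) ∈ A × Y` with `a • y = x`, so that
`E(A, Y) = ∑ₓ r(x)²`. Every `a ∈ S := A ∩ Sym_α(Y)` moves at least `α |Y|` points of `Y`
into `Y`, hence `∑_{x ∈ Y} r(x) ≥ α |S| |Y|`, and Cauchy–Schwarz over `x ∈ Y` gives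
`(α |S| |Y|)² ≤ |Y| E(A, Y)`.
-/

open Finset
open scoped Pointwise

namespace MulAction

variable {G X : Type*} [Group G] [MulAction G X]

noncomputable def smulEnergy (A : Finset G) (Y : Finset X) : ℕ :=
  #{q ∈ (A ×ˢ A) ×ˢ (Y ×ˢ Y) | q.1.1 • q.2.1 = q.1.2 • q.2.2}

lemma smulEnergy_eq_sum_sq (A : Finset G) (Y : Finset X) :
    smulEnergy A Y = ∑ x ∈ A • Y, #{p ∈ A ×ˢ Y | p.1 • p.2 = x} ^ 2 := by
  calc smulEnergy A Y = #{q ∈ (A ×ˢ Y) ×ˢ (A ×ˢ Y) | q.1.1 • q.1.2 = q.2.1 • q.2.2} :=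
        card_equiv (.prodProdProdComm _ _ _ _) (by simp [and_and_and_comm])
    _ = ∑ x ∈ A • Y, #{q ∈ (A ×ˢ Y) ×ˢ (A ×ˢ Y) | q.1.1 • q.1.2 = q.2.1 • q.2.2 ∧
          q.1.1 • q.1.2 = x} := by
        rw [card_eq_sum_card_fiberwise (f := fun q => q.1.1 • q.1.2) (t := A • Y)]
        · simp only [filter_filter]
        · intro q hq
          simp only [coe_filter, mem_product, Set.mem_ofPred_eq] at hq
          exact smul_mem_smul hq.1.1.1 hq.1.1.2
    _ = _ := by
        refine sum_congr rfl fun x _ => ?_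
        rw [sq, ← card_product]
        congr 1
        ext q
        simp only [mem_filter, mem_product]
        constructor
        · rintro ⟨h, hq, hx⟩; exact ⟨⟨h.1, hx⟩, h.2, hq ▸ hx⟩
        · rintro ⟨⟨h₁, hx₁⟩, h₂, hx₂⟩; exact ⟨⟨h₁, h₂⟩, hx₁.trans hx₂.symm, hx₁⟩

lemma card_sq_le_card_mul_smulEnergy (A : Finset G) (Y U : Finset X) :
    #{p ∈ A ×ˢ Y | p.1 • p.2 ∈ U} ^ 2 ≤ #U * smulEnergy A Y := by
  calc
    _ = (∑ x ∈ U, #{p ∈ A ×ˢ Y | p.1 • p.2 = x}) ^ 2 := by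
        rw [← sum_card_fiberwise_eq_card_filter]
    _ ≤ #U * ∑ x ∈ U, #{p ∈ A ×ˢ Y | p.1 • p.2 = x} ^ 2 := sq_sum_le_card_mul_sum_sq
    _ ≤ #U * ∑ x ∈ A • Y, #{p ∈ A ×ˢ Y | p.1 • p.2 = x} ^ 2 := by
        refine Nat.mul_le_mul_left _ (sum_le_sum_of_ne_zero fun x _ hx => ?_)
        obtain ⟨p, hp⟩ := card_pos.mp (Nat.pos_of_ne_zero (pow_ne_zero_iff two_ne_zero |>.mp hx))
        rw [mem_filter, mem_product] at hp
        exact hp.2 ▸ smul_mem_smul hp.1.1 hp.1.2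
    _ = #U * smulEnergy A Y := by rw [smulEnergy_eq_sum_sq]

lemma card_filter_smul_mem_eq_sum_card_inter (A : Finset G) (Y U : Finset X) :
    #{p ∈ A ×ˢ Y | p.1 • p.2 ∈ U} = ∑ a ∈ A, #(U ∩ Y.image (a • ·)) := by
  rw [card_filter, sum_product]
  refine sum_congr rfl fun a _ => ?_
  rw [← card_filter, inter_comm, ← filter_mem_eq_inter, filter_image,
    card_image_of_injective _ (MulAction.injective a)]

end MulAction

theorem stmt17_general {G X : Type*} [Group G] [MulAction G X]
    (A : Finset G) (Y : Finset X)
    (α : ℝ) (hα0 : 0 ≤ α) :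
    α ^ 2 *
        ((A.filter (fun g => α * Y.card ≤
          ((Y ∩ Y.image (fun y => g • y)).card : ℝ))).card : ℝ) ^ 2 * Y.card ≤
      ((((A ×ˢ A) ×ˢ (Y ×ˢ Y)).filter
          (fun q => q.1.1 • q.2.1 = q.1.2 • q.2.2)).card : ℝ) := by
  set S := A.filter (fun g => α * Y.card ≤ ((Y ∩ Y.image (fun y => g • y)).card : ℝ))
  have hS : α * #S * #Y ≤ (#{p ∈ A ×ˢ Y | p.1 • p.2 ∈ Y} : ℝ) :=
    calc α * #S * #Y = ∑ _a ∈ S, α * #Y := by rw [sum_const, nsmul_eq_mul]; ring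
      _ ≤ ∑ a ∈ S, (#(Y ∩ Y.image (a • ·)) : ℝ) := sum_le_sum fun a ha => (mem_filter.mp ha).2
      _ = #{p ∈ S ×ˢ Y | p.1 • p.2 ∈ Y} := by
        rw [MulAction.card_filter_smul_mem_eq_sum_card_inter, Nat.cast_sum]
      _ ≤ #{p ∈ A ×ˢ Y | p.1 • p.2 ∈ Y} := by
        gcongr
        exact filter_subset _ _
  have hCS : (#{p ∈ A ×ˢ Y | p.1 • p.2 ∈ Y} : ℝ) ^ 2 ≤ #Y * MulAction.smulEnergy A Y := by
    exact_mod_cast MulAction.card_sq_le_card_mul_smulEnergy A Y Y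
  have hSq : (α * #S * #Y) ^ 2 ≤ #Y * MulAction.smulEnergy A Y :=
    (pow_le_pow_left₀ (by positivity) hS 2).trans hCS
  rcases (Nat.cast_nonneg (α := ℝ) #Y).eq_or_lt with hY | hY
  · rw [← hY, mul_zero]; positivity
  · refine le_of_mul_le_mul_right ?_ hY
    rw [MulAction.smulEnergy] at hSq
    linarith

theorem stmt17 {G X : Type*} [Group G] [MulAction G X]
    (A : Finset G) (Y : Finset X) (hY : Y.Nonempty)
    (α : ℝ) (hα0 : 0 ≤ α) (hα1 : α ≤ 1) :
    α ^ 2 *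
        ((A.filter (fun g => α * Y.card ≤
          ((Y ∩ Y.image (fun y => g • y)).card : ℝ))).card : ℝ) ^ 2 * Y.card ≤
      ((((A ×ˢ A) ×ˢ (Y ×ˢ Y)).filter
          (fun q => q.1.1 • q.2.1 = q.1.2 • q.2.2)).card : ℝ) :=
  stmt17_general A Y α hα0
end

section
/- (Small image set implies symmetry structure) Let G act on X, A ⊆ G and Y ⊆ X finite nonempty. Suppose E ⊆ A × Y satisfies |E| ≥ ρ|A||Y| and |A_E(Y)| ≤ K|Y| for some 0 < ρ ≤ 1 and K ≥ 1. Then setting Y' = Y ∪ A_E(Y) and A' = {a ∈ A : |{y ∈ Y : (a,y) ∈ E}| ≥ ρ|Y|/2}, we have |A'| ≥ (ρ/2)|A|, |Y'| ≤ (K+1)|Y|, and A' ⊆ Sym_{ρ/(2(K+1))}(Y'). -/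
open scoped Classical

theorem stmt18 {G X : Type*} [Group G] [MulAction G X]
    (A : Finset G) (Y : Finset X) (hA : A.Nonempty) (hY : Y.Nonempty)
    (E : Finset (G × X)) (hE : E ⊆ A ×ˢ Y)
    (ρ K : ℝ) (hρ0 : 0 < ρ) (hρ1 : ρ ≤ 1) (hK : 1 ≤ K)
    (hsize : ρ * A.card * Y.card ≤ (E.card : ℝ))
    (himg : ((E.image (fun p => p.1 • p.2)).card : ℝ) ≤ K * Y.card) :
    ρ / 2 * A.card ≤
        ((A.filter (fun a => ρ * Y.card / 2 ≤
          ((Y.filter (fun y => (a, y) ∈ E)).card : ℝ))).card : ℝ) ∧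
    (((Y ∪ E.image (fun p => p.1 • p.2)).card : ℝ) ≤ (K + 1) * Y.card) ∧
    (∀ a ∈ A.filter (fun a => ρ * Y.card / 2 ≤
        ((Y.filter (fun y => (a, y) ∈ E)).card : ℝ)),
      ρ / (2 * (K + 1)) * ((Y ∪ E.image (fun p => p.1 • p.2)).card : ℝ) ≤
        (((Y ∪ E.image (fun p => p.1 • p.2)) ∩
          (Y ∪ E.image (fun p => p.1 • p.2)).image (fun y => a • y)).card : ℝ)) := by
  have hYpos : (0:ℝ) < Y.card := by exact_mod_cast Finset.card_pos.mpr hY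
  set img := E.image (fun p => p.1 • p.2) with himgdef
  set Y' := Y ∪ img with hY'def
  set P := fun a : G => ρ * Y.card / 2 ≤ ((Y.filter (fun y => (a, y) ∈ E)).card : ℝ) with hPdef
  set A' := A.filter P with hA'def
  -- Y' bound
  have hY'le : (Y'.card : ℝ) ≤ (K + 1) * Y.card := by
    have h := Finset.card_union_le Y img
    have h' : (Y'.card : ℝ) ≤ (Y.card : ℝ) + img.card := by exact_mod_cast h
    linarith
  -- fiber sum bound
  have h1 : (E.card : ℝ) ≤ ∑ a ∈ A, ((Y.filter (fun y => (a, y) ∈ E)).card : ℝ) := by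
    have hsub : E ⊆ A.biUnion (fun a => (Y.filter (fun y => (a, y) ∈ E)).image (fun y => (a, y))) := by
      intro p hp
      have hpA := hE hp
      simp only [Finset.mem_product] at hpA
      simp only [Finset.mem_biUnion, Finset.mem_image, Finset.mem_filter]
      exact ⟨p.1, hpA.1, p.2, ⟨hpA.2, hp⟩, rfl⟩
    have h1' : E.card ≤ ∑ a ∈ A, (Y.filter (fun y => (a, y) ∈ E)).card :=
      calc E.card ≤ (A.biUnion (fun a => (Y.filter (fun y => (a, y) ∈ E)).image (fun y => (a, y)))).card :=
            Finset.card_le_card hsub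
        _ ≤ ∑ a ∈ A, ((Y.filter (fun y => (a, y) ∈ E)).image (fun y => (a, y))).card :=
            Finset.card_biUnion_le
        _ ≤ ∑ a ∈ A, (Y.filter (fun y => (a, y) ∈ E)).card :=
            Finset.sum_le_sum (fun a _ => Finset.card_image_le)
    calc (E.card : ℝ) ≤ ((∑ a ∈ A, (Y.filter (fun y => (a, y) ∈ E)).card : ℕ) : ℝ) := by
          exact_mod_cast h1'
      _ = ∑ a ∈ A, ((Y.filter (fun y => (a, y) ∈ E)).card : ℝ) := by push_cast; rfl
  have h2 : ∑ a ∈ A, ((Y.filter (fun y => (a, y) ∈ E)).card : ℝ) ≤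
      (A'.card : ℝ) * Y.card + (A.card : ℝ) * (ρ * Y.card / 2) := by
    rw [← Finset.sum_filter_add_sum_filter_not A P]
    have hs1 : ∑ a ∈ A.filter P, ((Y.filter (fun y => (a, y) ∈ E)).card : ℝ) ≤
        (A'.card : ℝ) * Y.card := by
      calc ∑ a ∈ A.filter P, ((Y.filter (fun y => (a, y) ∈ E)).card : ℝ)
          ≤ ∑ _a ∈ A.filter P, (Y.card : ℝ) :=
            Finset.sum_le_sum (fun a _ => by
              exact_mod_cast Finset.card_le_card (Finset.filter_subset _ _))
        _ = (A'.card : ℝ) * Y.card := by rw [Finset.sum_const, nsmul_eq_mul, hA'def]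
    have hs2 : ∑ a ∈ A.filter (fun a => ¬ P a), ((Y.filter (fun y => (a, y) ∈ E)).card : ℝ) ≤
        (A.card : ℝ) * (ρ * Y.card / 2) := by
      calc ∑ a ∈ A.filter (fun a => ¬ P a), ((Y.filter (fun y => (a, y) ∈ E)).card : ℝ)
          ≤ ∑ _a ∈ A.filter (fun a => ¬ P a), (ρ * Y.card / 2) :=
            Finset.sum_le_sum (fun a ha => by
              have := (Finset.mem_filter.mp ha).2
              rw [hPdef] at this
              exact le_of_not_ge this)
        _ = ((A.filter (fun a => ¬ P a)).card : ℝ) * (ρ * Y.card / 2) := by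
            rw [Finset.sum_const, nsmul_eq_mul]
        _ ≤ (A.card : ℝ) * (ρ * Y.card / 2) := by
            have hle : ((A.filter (fun a => ¬ P a)).card : ℝ) ≤ (A.card : ℝ) := by
              exact_mod_cast Finset.card_le_card (Finset.filter_subset _ _)
            have hnn : (0:ℝ) ≤ ρ * Y.card / 2 := by positivity
            exact mul_le_mul_of_nonneg_right hle hnn
    linarith
  have hmain : ρ / 2 * A.card ≤ (A'.card : ℝ) := by
    have key : ρ / 2 * A.card * Y.card ≤ (A'.card : ℝ) * Y.card := by nlinarith
    exact le_of_mul_le_mul_right key hYpos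
  refine ⟨hmain, hY'le, ?_⟩
  intro a ha
  have haf : ρ * Y.card / 2 ≤ ((Y.filter (fun y => (a, y) ∈ E)).card : ℝ) :=
    (Finset.mem_filter.mp ha).2
  set S := (Y.filter (fun y => (a, y) ∈ E)).image (fun y => a • y) with hSdef
  have hScard : S.card = (Y.filter (fun y => (a, y) ∈ E)).card :=
    Finset.card_image_of_injective _ (MulAction.injective a)
  have hSsub : S ⊆ Y' ∩ Y'.image (fun y => a • y) := by
    intro x hx
    rw [hSdef] at hx
    simp only [Finset.mem_image, Finset.mem_filter] at hx
    obtain ⟨y, ⟨hyY, hyE⟩, rfl⟩ := hx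
    rw [Finset.mem_inter]
    constructor
    · rw [hY'def, Finset.mem_union]
      right
      rw [himgdef]
      exact Finset.mem_image.mpr ⟨(a, y), hyE, rfl⟩
    · exact Finset.mem_image.mpr ⟨y, by rw [hY'def, Finset.mem_union]; exact Or.inl hyY, rfl⟩
  have hcard : ((Y.filter (fun y => (a, y) ∈ E)).card : ℝ) ≤
      ((Y' ∩ Y'.image (fun y => a • y)).card : ℝ) := by
    rw [← hScard]
    exact_mod_cast Finset.card_le_card hSsub
  have hK1 : (0:ℝ) < K + 1 := by linarith
  calc ρ / (2 * (K + 1)) * (Y'.card : ℝ) ≤ ρ / (2 * (K + 1)) * ((K + 1) * Y.card) := by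
        have : (0:ℝ) ≤ ρ / (2 * (K + 1)) := by positivity
        exact mul_le_mul_of_nonneg_left hY'le this
    _ = ρ * Y.card / 2 := by field_simp
    _ ≤ _ := le_trans haf hcard
end

section
/- (Ruzsa covering for group actions, maximality step) Let G act on X, A ⊆ G finite nonempty, Y ⊆ X finite. Then there exists Z ⊆ Y such that Y ⊆ A⁻¹A(Z), the images A(z) for z ∈ Z are pairwise disjoint (so |A(Z)| = ∑_{z∈Z}|A(z)|), and if moreover |A(Y)| ≤ K|Y| then |Z| ≤ (K|Y|/|A|) · max_{z∈Z} |A⁻¹A ∩ Stab(z)|. -/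
open scoped Classical

/-
Take a maximal subset `Z ⊆ Y` whose translates `A(z)` are pairwise disjoint. By maximality
every `y ∈ Y` has `A(y)` meeting some `A(z)`, i.e. `a • y = b • z`, so
`y = (a⁻¹ * b) • z ∈ A⁻¹A(Z)`.
For the size bound, the fibres of `a ↦ a • z` on `A` are left translates of subsets of
`A⁻¹A ∩ Stab(z)`, so `|A| ≤ M |A(z)|` with `M` bounding these intersections; summing over the
disjoint `A(z) ⊆ A(Y)` gives `|Z| |A| ≤ M |A(Y)| ≤ M K |Y|`.
-/

open Finset

theorem Finset.exists_maximal_pairwiseDisjoint {ι α : Type*} [PartialOrder α] [OrderBot α]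
    (f : ι → α) (Y : Finset ι) :
    ∃ Z ⊆ Y, (Z : Set ι).PairwiseDisjoint f ∧
      ∀ y ∈ Y, y ∉ Z → ∃ z ∈ Z, ¬Disjoint (f y) (f z) := by
  set S := Y.powerset.filter fun Z : Finset ι => (Z : Set ι).PairwiseDisjoint f
  obtain ⟨Z, hZ, hmax⟩ := S.exists_max_image card ⟨∅, by simp [S]⟩
  rw [mem_filter, mem_powerset] at hZ
  refine ⟨Z, hZ.1, hZ.2, fun y hy hyZ => ?_⟩
  by_contra! hdisj
  have hins : insert y Z ∈ S := by
    rw [mem_filter, mem_powerset, coe_insert, Set.pairwiseDisjoint_insert]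
    exact ⟨insert_subset hy hZ.1, hZ.2, fun z hz _ => hdisj z hz⟩
  have := hmax _ hins
  rw [card_insert_of_notMem hyZ] at this
  omega

section SmulImage

variable {G X : Type*} [Group G] [MulAction G X] (A : Finset G)

theorem exists_mem_inv_mul_smul_eq_of_not_disjoint {y z : X}
    (h : ¬Disjoint (A.image (· • y)) (A.image (· • z))) :
    ∃ g ∈ (A ×ˢ A).image (fun p => p.1⁻¹ * p.2), g • z = y := by
  obtain ⟨x, hxy, hxz⟩ := not_disjoint_iff.1 h
  obtain ⟨a, ha, rfl⟩ := mem_image.1 hxy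
  obtain ⟨b, hb, hab⟩ := mem_image.1 hxz
  refine ⟨a⁻¹ * b, mem_image.2 ⟨(a, b), mem_product.2 ⟨ha, hb⟩, rfl⟩, ?_⟩
  rw [mul_smul, hab, inv_smul_smul]

theorem card_le_card_stabilizer_mul_card_image_smul (z : X) :
    #A ≤ #(((A ×ˢ A).image (fun p => p.1⁻¹ * p.2)).filter (fun g => g • z = z)) *
      #(A.image (· • z)) := by
  refine card_le_mul_card_image _ _ fun x hx => ?_
  obtain ⟨a₀, ha₀, rfl⟩ := mem_image.1 hx
  refine card_le_card_of_injOn (a₀⁻¹ * ·) (fun a ha => ?_) fun a _ b _ h => mul_left_cancel h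
  rw [coe_filter] at ha
  rw [coe_filter]
  refine ⟨mem_image.2 ⟨(a₀, a), mem_product.2 ⟨ha₀, ha.1⟩, rfl⟩, ?_⟩
  rw [mul_smul, ha.2, inv_smul_smul]

theorem card_mul_card_le_of_pairwiseDisjoint {Y Z : Finset X} (hZY : Z ⊆ Y)
    (hdisj : (Z : Set X).PairwiseDisjoint (fun z => A.image (· • z))) {M : ℕ}
    (hM : ∀ z ∈ Z,
      #(((A ×ˢ A).image (fun p => p.1⁻¹ * p.2)).filter (fun g => g • z = z)) ≤ M) :
    #Z * #A ≤ M * #((A ×ˢ Y).image (fun p => p.1 • p.2)) := by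
  have hsub :
      Z.biUnion (fun z => A.image (· • z)) ⊆ (A ×ˢ Y).image (fun p => p.1 • p.2) := by
    intro x hx
    obtain ⟨z, hz, hx⟩ := mem_biUnion.1 hx
    obtain ⟨a, ha, rfl⟩ := mem_image.1 hx
    exact mem_image.2 ⟨(a, z), mem_product.2 ⟨ha, hZY hz⟩, rfl⟩
  calc #Z * #A = ∑ _z ∈ Z, #A := by rw [sum_const, smul_eq_mul]
    _ ≤ ∑ z ∈ Z, M * #(A.image (· • z)) := sum_le_sum fun z hz =>
        (card_le_card_stabilizer_mul_card_image_smul A z).trans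
          (Nat.mul_le_mul_right _ (hM z hz))
    _ = M * #(Z.biUnion fun z => A.image (· • z)) := by rw [card_biUnion hdisj, mul_sum]
    _ ≤ M * #((A ×ˢ Y).image (fun p => p.1 • p.2)) :=
        Nat.mul_le_mul_left M (card_le_card hsub)

end SmulImage

theorem stmt19_general {G X : Type*} [Group G] [MulAction G X]
    (A : Finset G) (hA : A.Nonempty) (Y : Finset X) (K : ℝ) :
    ∃ Z ⊆ Y,
      (Y ⊆ ((((A ×ˢ A).image (fun p => p.1⁻¹ * p.2)) ×ˢ Z).image (fun p => p.1 • p.2))) ∧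
      (∀ z ∈ Z, ∀ z' ∈ Z, z ≠ z' →
        Disjoint (A.image (fun a => a • z)) (A.image (fun a => a • z'))) ∧
      ((((A ×ˢ Y).image (fun p => p.1 • p.2)).card : ℝ) ≤ K * Y.card →
        ∀ M : ℕ,
          (∀ z ∈ Z, (((A ×ˢ A).image (fun p => p.1⁻¹ * p.2)).filter
            (fun g => g • z = z)).card ≤ M) →
          (Z.card : ℝ) ≤ K * Y.card / A.card * M) := by
  obtain ⟨Z, hZY, hdisj, hmax⟩ :=
    Y.exists_maximal_pairwiseDisjoint (fun z => A.image (· • z))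
  refine ⟨Z, hZY, fun y hy => ?_, hdisj, fun hAY M hM => ?_⟩
  · have hcover :
        ∃ z ∈ Z, ∃ g ∈ (A ×ˢ A).image (fun p => p.1⁻¹ * p.2), g • z = y := by
      by_cases hyZ : y ∈ Z
      · obtain ⟨a, ha⟩ := hA
        refine ⟨y, hyZ, 1, ?_, one_smul _ _⟩
        exact mem_image.2 ⟨(a, a), mem_product.2 ⟨ha, ha⟩, inv_mul_cancel a⟩
      · obtain ⟨z, hz, hyz⟩ := hmax y hy hyZ
        exact ⟨z, hz, exists_mem_inv_mul_smul_eq_of_not_disjoint A hyz⟩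
    obtain ⟨z, hz, g, hg, rfl⟩ := hcover
    exact mem_image.2 ⟨(g, z), mem_product.2 ⟨hg, hz⟩, rfl⟩
  · have hcount : (#Z * #A : ℝ) ≤ M * #((A ×ˢ Y).image (fun p => p.1 • p.2)) := by
      exact_mod_cast card_mul_card_le_of_pairwiseDisjoint A hZY hdisj hM
    rw [div_mul_eq_mul_div, le_div_iff₀ (by exact_mod_cast hA.card_pos)]
    calc (#Z * #A : ℝ) ≤ M * #((A ×ˢ Y).image (fun p => p.1 • p.2)) := hcount
      _ ≤ M * (K * #Y) := by gcongr
      _ = K * #Y * M := by ring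

theorem stmt19 {G X : Type*} [Group G] [MulAction G X]
    (A : Finset G) (hA : A.Nonempty) (Y : Finset X) (hY : Y.Nonempty) (K : ℝ) (hK : 1 ≤ K) :
    ∃ Z ⊆ Y,
      (Y ⊆ ((((A ×ˢ A).image (fun p => p.1⁻¹ * p.2)) ×ˢ Z).image (fun p => p.1 • p.2))) ∧
      (∀ z ∈ Z, ∀ z' ∈ Z, z ≠ z' →
        Disjoint (A.image (fun a => a • z)) (A.image (fun a => a • z'))) ∧
      ((((A ×ˢ Y).image (fun p => p.1 • p.2)).card : ℝ) ≤ K * Y.card →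
        ∀ M : ℕ,
          (∀ z ∈ Z, (((A ×ˢ A).image (fun p => p.1⁻¹ * p.2)).filter
            (fun g => g • z = z)).card ≤ M) →
          (Z.card : ℝ) ≤ K * Y.card / A.card * M) :=
  stmt19_general A hA Y K
end
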